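/- arXiv:math/9803162 — 2 statements merged into one kernel-verified Lean document; each statement's English description precedes it below -/
import Mathlib

section
/- The Laplace functional of the Poisson point process: for the Poisson process π_σ with intensity σ and any measurable f: X → ℝ with f ≤ 0 and e^f − 1 ∈ L¹(X;σ), one has ∫ exp(⟨f,γ⟩) π_σ(dγ) = exp(∫_X (e^f − 1) dσ). -/
/-!
Write `expNeg t = e^{-t}` on `[0, ∞]` (so `e^{-∞} = 0`) and `⟨g, γ⟩ = ∫⁻ g dγ`. For a simple
function `s` whose nonzero level sets have finite intensity, `⟨s, γ⟩ = ∑ c • γ (s⁻¹ {c})` is a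
finite sum of independent scaled Poisson counts, and a Poisson variable `N` of mean `m`
satisfies `E e^{-cN} = exp (-(1 - e^{-c}) m)`. Multiplying gives
`E e^{-⟨s, γ⟩} = exp (-∫ (1 - e^{-s}) dσ)`, and monotone convergence on both sides extends this
to every measurable `g ≥ 0`, σ-finiteness providing such simple approximants.

The theorem is the case `g = -f`, except that `∫ f dγ` is a Bochner integral, which is `0` when
`f ∉ L¹(γ)`; so one also needs `⟨g, γ⟩ < ∞` for π-a.e. `γ`. Applying the identity to `g / n`
gives `E e^{-⟨g, γ⟩ / n} → 1`, while each of these expectations is at most `π (⟨g, γ⟩ < ∞)`.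
-/

open MeasureTheory ProbabilityTheory Filter
open scoped ENNReal Topology

/-- `π` is a Poisson point process with intensity `σ`: a probability measure on the
space of (configuration) measures on `X` such that for every measurable set `A` of finite
intensity the number of points in `A` is Poisson distributed with mean `σ A`, and the
counts on pairwise disjoint measurable sets are independent. -/
def IsPoissonPP {X : Type*} [MeasurableSpace X] (σ : Measure X)
    (π : Measure (Measure X)) : Prop :=
  IsProbabilityMeasure π ∧
  (∀ A : Set X, MeasurableSet A → σ A ≠ ⊤ → ∀ k : ℕ,
      π {γ : Measure X | γ A = k} =
        ENNReal.ofReal (Real.exp (-(σ A).toReal) * (σ A).toReal ^ k / (Nat.factorial k))) ∧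
  (∀ (ι : Type) (A : ι → Set X), (∀ i, MeasurableSet (A i)) →
      Pairwise (Function.onFun Disjoint A) →
      iIndepFun (fun i (γ : Measure X) => γ (A i)) π)

noncomputable def expNeg (t : ℝ≥0∞) : ℝ≥0∞ := EReal.exp (-t)

@[simp] lemma expNeg_zero : expNeg 0 = 1 := by simp [expNeg]

@[simp] lemma expNeg_top : expNeg ⊤ = 0 := by simp [expNeg]

lemma expNeg_ofReal {x : ℝ} (hx : 0 ≤ x) :
    expNeg (ENNReal.ofReal x) = ENNReal.ofReal (Real.exp (-x)) := by
  rw [expNeg, EReal.coe_ennreal_ofReal, max_eq_left hx, ← EReal.coe_neg, EReal.exp_coe]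

lemma expNeg_le_one (t : ℝ≥0∞) : expNeg t ≤ 1 :=
  EReal.exp_le_one_iff.2 (by simpa using EReal.coe_ennreal_nonneg t)

lemma expNeg_ne_top (t : ℝ≥0∞) : expNeg t ≠ ⊤ :=
  ((expNeg_le_one t).trans_lt ENNReal.one_lt_top).ne

lemma expNeg_add (a b : ℝ≥0∞) : expNeg (a + b) = expNeg a * expNeg b := by
  rw [expNeg, expNeg, expNeg, ← EReal.exp_add, EReal.coe_ennreal_add, EReal.neg_add
    (.inl (EReal.coe_ennreal_ne_bot a)) (.inr (EReal.coe_ennreal_ne_bot b)), sub_eq_add_neg]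

lemma expNeg_sum {ι : Type*} (s : Finset ι) (t : ι → ℝ≥0∞) :
    expNeg (∑ i ∈ s, t i) = ∏ i ∈ s, expNeg (t i) := by
  classical
  induction s using Finset.induction_on with
  | empty => simp
  | insert i s hi ih => rw [Finset.sum_insert hi, Finset.prod_insert hi, expNeg_add, ih]

lemma expNeg_natCast_mul (k : ℕ) (c : ℝ≥0∞) : expNeg (k * c) = expNeg c ^ k := by
  simpa using expNeg_sum (Finset.range k) fun _ => c

lemma antitone_expNeg : Antitone expNeg := fun _ _ h =>
  EReal.exp_monotone (EReal.neg_le_neg_iff.2 (EReal.coe_ennreal_le_coe_ennreal_iff.2 h))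

lemma continuous_expNeg : Continuous expNeg :=
  ENNReal.continuous_exp.comp (continuous_neg.comp continuous_coe_ennreal_ereal)

lemma measurable_expNeg : Measurable expNeg := continuous_expNeg.measurable

lemma toReal_expNeg {t : ℝ≥0∞} (ht : t ≠ ⊤) : (expNeg t).toReal = Real.exp (-t.toReal) := by
  rw [← ENNReal.ofReal_toReal ht, expNeg_ofReal ENNReal.toReal_nonneg,
    ENNReal.toReal_ofReal (Real.exp_nonneg _), ENNReal.toReal_ofReal ENNReal.toReal_nonneg]

lemma tsum_pow_mul_ofReal_poisson {m r : ℝ≥0∞} (hm : m ≠ ⊤) (hr : r ≤ 1) :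
    ∑' k : ℕ, r ^ k * ENNReal.ofReal (Real.exp (-m.toReal) * m.toReal ^ k / k.factorial)
      = expNeg ((1 - r) * m) := by
  set a := m.toReal
  set ρ := r.toReal
  have hr_top : r ≠ ⊤ := ne_top_of_le_ne_top ENNReal.one_ne_top hr
  have hρ : ρ ≤ 1 := ENNReal.toReal_le_of_le_ofReal zero_le_one (by simpa using hr)
  have hterm : ∀ k : ℕ, r ^ k * ENNReal.ofReal (Real.exp (-a) * a ^ k / k.factorial)
      = ENNReal.ofReal (Real.exp (-a) * ((a * ρ) ^ k / k.factorial)) := fun k => by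
    rw [← ENNReal.ofReal_toReal hr_top, ← ENNReal.ofReal_pow ENNReal.toReal_nonneg,
      ← ENNReal.ofReal_mul (by positivity)]
    congr 1
    ring
  have hsum : HasSum (fun k : ℕ => Real.exp (-a) * ((a * ρ) ^ k / k.factorial))
      (Real.exp (-((1 - ρ) * a))) := by
    have := (NormedSpace.expSeries_div_hasSum_exp (a * ρ)).mul_left (Real.exp (-a))
    rwa [← Real.exp_eq_exp_ℝ, ← Real.exp_add, show -a + a * ρ = -((1 - ρ) * a) by ring] at this
  have hexponent : (1 - r) * m = ENNReal.ofReal ((1 - ρ) * a) := by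
    rw [ENNReal.ofReal_mul (sub_nonneg.2 hρ), ENNReal.ofReal_sub _ ENNReal.toReal_nonneg,
      ENNReal.ofReal_one, ENNReal.ofReal_toReal hr_top, ENNReal.ofReal_toReal hm]
  rw [tsum_congr hterm, ← ENNReal.ofReal_tsum_of_nonneg (fun k => by positivity) hsum.summable,
    hsum.tsum_eq, hexponent, expNeg_ofReal (mul_nonneg (sub_nonneg.2 hρ) ENNReal.toReal_nonneg)]

lemma pairwise_disjoint_natCast_fiber {α : Type*} (Y : α → ℝ≥0∞) :
    Pairwise (Function.onFun Disjoint fun k : ℕ => {x | Y x = k}) := fun _ _ hij =>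
  Set.disjoint_left.2 fun _ hi hj => hij (Nat.cast_injective (hi.symm.trans hj))

section Measure

variable {α : Type*} [MeasurableSpace α] {μ : Measure α}

lemma lintegral_comp_eq_tsum_of_ae_natCast {Y : α → ℝ≥0∞} (hY : Measurable Y)
    (hnat : ∀ᵐ x ∂μ, ∃ k : ℕ, Y x = k) (F : ℝ≥0∞ → ℝ≥0∞) :
    ∫⁻ x, F (Y x) ∂μ = ∑' k : ℕ, F k * μ {x | Y x = k} := by
  have hfiber : ∀ k : ℕ, MeasurableSet {x | Y x = k} := fun k => hY (measurableSet_singleton _)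
  have hU : ∀ᵐ x ∂μ, x ∈ ⋃ k : ℕ, {x | Y x = k} := by simpa using hnat
  calc ∫⁻ x, F (Y x) ∂μ = ∫⁻ x in ⋃ k : ℕ, {x | Y x = k}, F (Y x) ∂μ := by
        rw [Measure.restrict_eq_self_of_ae_mem hU]
    _ = ∑' k : ℕ, ∫⁻ x in {x | Y x = k}, F (Y x) ∂μ :=
        lintegral_iUnion hfiber (pairwise_disjoint_natCast_fiber Y) _
    _ = ∑' k : ℕ, F k * μ {x | Y x = k} := tsum_congr fun k => by
        rw [setLIntegral_congr_fun (hfiber k) fun x (hx : Y x = k) => by rw [hx],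
          setLIntegral_const]

lemma integral_eq_neg_toReal_lintegral_ofReal_neg {f : α → ℝ} (hf : AEStronglyMeasurable f μ)
    (hf_nonpos : ∀ᵐ x ∂μ, f x ≤ 0) :
    ∫ x, f x ∂μ = -(∫⁻ x, ENNReal.ofReal (-f x) ∂μ).toReal := by
  rw [← integral_eq_lintegral_of_nonneg_ae (hf_nonpos.mono fun _ => neg_nonneg.2) hf.neg,
    integral_neg, neg_neg]

lemma lintegral_one_sub_expNeg_ofReal_neg {f : α → ℝ} (hf_nonpos : ∀ x, f x ≤ 0)
    (hf : Integrable (fun x => 1 - Real.exp (f x)) μ) :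
    ∫⁻ x, 1 - expNeg (ENNReal.ofReal (-f x)) ∂μ
      = ENNReal.ofReal (∫ x, 1 - Real.exp (f x) ∂μ) := by
  rw [ofReal_integral_eq_lintegral_ofReal hf
    (ae_of_all _ fun x => sub_nonneg.2 (Real.exp_le_one_iff.2 (hf_nonpos x)))]
  refine lintegral_congr fun x => ?_
  rw [expNeg_ofReal (neg_nonneg.2 (hf_nonpos x)), neg_neg,
    ENNReal.ofReal_sub _ (Real.exp_nonneg _), ENNReal.ofReal_one]

lemma SimpleFunc.exists_finMeasSupp_monotone_tendsto [SigmaFinite μ] {g : α → ℝ≥0∞}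
    (hg : Measurable g) :
    ∃ s : ℕ → SimpleFunc α ℝ≥0∞, (∀ n, (s n).FinMeasSupp μ) ∧ (∀ x, Monotone (s · x)) ∧
      ∀ x, Tendsto (s · x) atTop (𝓝 (g x)) := by
  have hrestrict : ∀ n x, (SimpleFunc.eapprox g n).restrict (spanningSets μ n) x
      = (spanningSets μ n).indicator (SimpleFunc.eapprox g n) x := fun n =>
    SimpleFunc.restrict_apply _ (measurableSet_spanningSets μ n)
  refine ⟨fun n => (SimpleFunc.eapprox g n).restrict (spanningSets μ n), fun n => ?_,
    fun x m n hmn => ?_, fun x => ?_⟩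
  · rw [SimpleFunc.finMeasSupp_iff_support, SimpleFunc.coe_restrict _
      (measurableSet_spanningSets μ n)]
    exact (measure_mono (Set.support_indicator_subset)).trans_lt
      (measure_spanningSets_lt_top μ n)
  · simp only [hrestrict]
    exact (Set.indicator_le_indicator_of_subset (monotone_spanningSets μ hmn) (fun _ => zero_le)
      x).trans (Set.indicator_le_indicator (SimpleFunc.monotone_eapprox g hmn x))
  · refine (SimpleFunc.tendsto_eapprox hg x).congr' ?_
    filter_upwards [eventually_mem_spanningSets μ x] with n hn
    simp only [hrestrict, Set.indicator_of_mem hn]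

lemma tendsto_lintegral_expNeg_lintegral {π : Measure (Measure α)} [IsFiniteMeasure π]
    {s : ℕ → α → ℝ≥0∞} {g : α → ℝ≥0∞}
    (hs : ∀ n, Measurable (s n)) (hmono : ∀ x, Monotone (s · x))
    (hlim : ∀ x, Tendsto (s · x) atTop (𝓝 (g x))) :
    Tendsto (fun n => ∫⁻ γ, expNeg (∫⁻ x, s n x ∂γ) ∂π) atTop
      (𝓝 (∫⁻ γ, expNeg (∫⁻ x, g x ∂γ) ∂π)) :=
  tendsto_lintegral_of_dominated_convergence 1
    (fun n => measurable_expNeg.comp (Measure.measurable_lintegral (hs n)))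
    (fun _ => ae_of_all _ fun _ => expNeg_le_one _) (by simp)
    (ae_of_all _ fun _ => (continuous_expNeg.tendsto _).comp
      (lintegral_tendsto_of_tendsto_of_monotone (fun n => (hs n).aemeasurable)
        (ae_of_all _ hmono) (ae_of_all _ hlim)))

lemma tendsto_expNeg_lintegral_one_sub_expNeg {s : ℕ → α → ℝ≥0∞} {g : α → ℝ≥0∞}
    (hs : ∀ n, Measurable (s n)) (hmono : ∀ x, Monotone (s · x))
    (hlim : ∀ x, Tendsto (s · x) atTop (𝓝 (g x))) :
    Tendsto (fun n => expNeg (∫⁻ x, 1 - expNeg (s n x) ∂μ)) atTop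
      (𝓝 (expNeg (∫⁻ x, 1 - expNeg (g x) ∂μ))) :=
  (continuous_expNeg.tendsto _).comp
    (lintegral_tendsto_of_tendsto_of_monotone
      (fun n => (measurable_const.sub (measurable_expNeg.comp (hs n))).aemeasurable)
      (ae_of_all _ fun x _ _ hmn => tsub_le_tsub_left (antitone_expNeg (hmono x hmn)) 1)
      (ae_of_all _ fun x => ((ENNReal.continuous_sub_left ENNReal.one_ne_top).tendsto _).comp
        ((continuous_expNeg.tendsto _).comp (hlim x))))

lemma lintegral_expNeg_mul_le_measure_ne_top {Y : α → ℝ≥0∞} (hY : Measurable Y) {c : ℝ≥0∞}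
    (hc : c ≠ 0) :
    ∫⁻ x, expNeg (c * Y x) ∂μ ≤ μ {x | Y x ≠ ⊤} := by
  calc ∫⁻ x, expNeg (c * Y x) ∂μ ≤ ∫⁻ x, {x | Y x ≠ ⊤}.indicator 1 x ∂μ :=
        lintegral_mono fun x => ?_
    _ = μ {x | Y x ≠ ⊤} := lintegral_indicator_one (hY (measurableSet_singleton ⊤)).compl
  by_cases h : Y x = ⊤
  · simp [h, ENNReal.mul_top hc]
  · simpa [h] using expNeg_le_one _

lemma tendsto_lintegral_one_sub_expNeg_mul {g : α → ℝ≥0∞} (hg : Measurable g)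
    (hg_fin : ∀ᵐ x ∂μ, g x ≠ ⊤) (hint : ∫⁻ x, 1 - expNeg (g x) ∂μ ≠ ⊤) {c : ℕ → ℝ≥0∞}
    (hc : Tendsto c atTop (𝓝 0)) :
    Tendsto (fun n => ∫⁻ x, 1 - expNeg (c n * g x) ∂μ) atTop (𝓝 0) := by
  have hc_le : ∀ᶠ n in atTop, c n ≤ 1 := hc.eventually (ge_mem_nhds zero_lt_one)
  have hpointwise : ∀ᵐ x ∂μ, Tendsto (fun n => 1 - expNeg (c n * g x)) atTop (𝓝 0) := by
    filter_upwards [hg_fin] with x hx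
    have hprod : Tendsto (fun n => c n * g x) atTop (𝓝 0) := by
      simpa using ENNReal.Tendsto.mul_const hc (.inr hx)
    simpa [Function.comp_def] using
      ((ENNReal.continuous_sub_left ENNReal.one_ne_top).tendsto _).comp
        ((continuous_expNeg.tendsto 0).comp hprod)
  simpa using tendsto_lintegral_filter_of_dominated_convergence (fun x => 1 - expNeg (g x))
    (.of_forall fun n => measurable_const.sub (measurable_expNeg.comp (hg.const_mul (c n))))
    (hc_le.mono fun n hn => ae_of_all _ fun x =>
      tsub_le_tsub_left (antitone_expNeg (mul_le_of_le_one_left zero_le hn)) 1)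
    hint hpointwise

end Measure

section Poisson

variable {X : Type*} [MeasurableSpace X] {σ : Measure X} {π : Measure (Measure X)}

lemma IsPoissonPP.ae_count_natCast (hπ : IsPoissonPP σ π) {A : Set X} (hA : MeasurableSet A)
    (hAσ : σ A ≠ ⊤) : ∀ᵐ γ ∂π, ∃ k : ℕ, γ A = (k : ℝ≥0∞) := by
  have := hπ.1
  have hfiber : ∀ k : ℕ, MeasurableSet {γ : Measure X | γ A = k} := fun k =>
    Measure.measurable_coe hA (measurableSet_singleton _)
  have hmass : π (⋃ k : ℕ, {γ | γ A = k}) = 1 := by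
    rw [measure_iUnion (pairwise_disjoint_natCast_fiber fun γ : Measure X => γ A) hfiber]
    simpa [hπ.2.1 A hA hAσ] using tsum_pow_mul_ofReal_poisson hAσ le_rfl
  simpa using (ae_mem_iff_measure_eq (MeasurableSet.iUnion hfiber).nullMeasurableSet).2
    (hmass.trans measure_univ.symm)

lemma IsPoissonPP.lintegral_expNeg_mul_count (hπ : IsPoissonPP σ π) {A : Set X}
    (hA : MeasurableSet A) (hAσ : σ A ≠ ⊤) (c : ℝ≥0∞) :
    ∫⁻ γ, expNeg (c * γ A) ∂π = expNeg ((1 - expNeg c) * σ A) := by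
  refine (lintegral_comp_eq_tsum_of_ae_natCast (Measure.measurable_coe hA)
    (hπ.ae_count_natCast hA hAσ) fun t => expNeg (c * t)).trans ?_
  rw [← tsum_pow_mul_ofReal_poisson hAσ (expNeg_le_one c)]
  exact tsum_congr fun k => by rw [mul_comm c, expNeg_natCast_mul, hπ.2.1 A hA hAσ k]

lemma IsPoissonPP.lintegral_expNeg_lintegral_simpleFunc (hπ : IsPoissonPP σ π)
    (s : SimpleFunc X ℝ≥0∞) (hs : s.FinMeasSupp σ) :
    ∫⁻ γ, expNeg (∫⁻ x, s x ∂γ) ∂π = expNeg (∫⁻ x, 1 - expNeg (s x) ∂σ) := by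
  have := hπ.1
  have hfiber : ∀ c, MeasurableSet (s ⁻¹' {c}) := s.measurableSet_fiber
  have hmeas : ∀ c, Measurable fun γ : Measure X => expNeg (c * γ (s ⁻¹' {c})) := fun c =>
    measurable_expNeg.comp ((Measure.measurable_coe (hfiber c)).const_mul c)
  have hindep : iIndepFun (fun c γ => expNeg (c * γ (s ⁻¹' {c}))) π :=
    (hπ.2.2 ℝ≥0∞ _ hfiber (pairwise_disjoint_fiber s)).comp _
      fun c => measurable_expNeg.comp (measurable_const_mul c)
  have hfactor : ∀ c ∈ s.range, ∫⁻ γ, expNeg (c * γ (s ⁻¹' {c})) ∂π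
      = expNeg ((1 - expNeg c) * σ (s ⁻¹' {c})) := fun c _ => by
    rcases eq_or_ne c 0 with rfl | hc
    · simp
    · exact hπ.lintegral_expNeg_mul_count (hfiber c) (hs.meas_preimage_singleton_ne_zero hc).ne c
  calc ∫⁻ γ, expNeg (∫⁻ x, s x ∂γ) ∂π
      = ∫⁻ γ, ∏ c ∈ s.range, expNeg (c * γ (s ⁻¹' {c})) ∂π := by
        simp_rw [SimpleFunc.lintegral_eq_lintegral, SimpleFunc.lintegral, expNeg_sum]
    _ = ∏ c ∈ s.range, ∫⁻ γ, expNeg (c * γ (s ⁻¹' {c})) ∂π :=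
        lintegral_prod_eq_prod_lintegral_of_indepFun _ _ hindep hmeas
    _ = expNeg (∑ c ∈ s.range, (1 - expNeg c) * σ (s ⁻¹' {c})) := by
        rw [Finset.prod_congr rfl hfactor, expNeg_sum]
    _ = expNeg (∫⁻ x, 1 - expNeg (s x) ∂σ) := by
        rw [← SimpleFunc.map_lintegral, ← SimpleFunc.lintegral_eq_lintegral,
          SimpleFunc.coe_map]
        rfl

theorem IsPoissonPP.lintegral_expNeg_lintegral [SigmaFinite σ] (hπ : IsPoissonPP σ π)
    {g : X → ℝ≥0∞} (hg : Measurable g) :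
    ∫⁻ γ, expNeg (∫⁻ x, g x ∂γ) ∂π = expNeg (∫⁻ x, 1 - expNeg (g x) ∂σ) := by
  have := hπ.1
  obtain ⟨s, hs_fin, hmono, hlim⟩ := SimpleFunc.exists_finMeasSupp_monotone_tendsto (μ := σ) hg
  have hs : ∀ n, Measurable (s n) := fun n => (s n).measurable
  exact tendsto_nhds_unique (tendsto_lintegral_expNeg_lintegral hs hmono hlim)
    ((tendsto_expNeg_lintegral_one_sub_expNeg hs hmono hlim).congr fun n =>
      (hπ.lintegral_expNeg_lintegral_simpleFunc (s n) (hs_fin n)).symm)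

lemma IsPoissonPP.ae_lintegral_ne_top [SigmaFinite σ] (hπ : IsPoissonPP σ π) {g : X → ℝ≥0∞}
    (hg : Measurable g) (hg_fin : ∀ᵐ x ∂σ, g x ≠ ⊤) (hint : ∫⁻ x, 1 - expNeg (g x) ∂σ ≠ ⊤) :
    ∀ᵐ γ ∂π, ∫⁻ x, g x ∂γ ≠ ⊤ := by
  have := hπ.1
  have hscaled : ∀ n : ℕ, ∫⁻ γ, expNeg ((n : ℝ≥0∞)⁻¹ * ∫⁻ x, g x ∂γ) ∂π
      = expNeg (∫⁻ x, 1 - expNeg ((n : ℝ≥0∞)⁻¹ * g x) ∂σ) := fun n => by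
    simpa only [lintegral_const_mul _ hg] using hπ.lintegral_expNeg_lintegral (hg.const_mul _)
  have hlim : Tendsto (fun n : ℕ => ∫⁻ γ, expNeg ((n : ℝ≥0∞)⁻¹ * ∫⁻ x, g x ∂γ) ∂π) atTop
      (𝓝 1) := by
    simpa [hscaled, Function.comp_def] using (continuous_expNeg.tendsto 0).comp
      (tendsto_lintegral_one_sub_expNeg_mul hg hg_fin hint ENNReal.tendsto_inv_nat_nhds_zero)
  have hmass : 1 ≤ π {γ | ∫⁻ x, g x ∂γ ≠ ⊤} := le_of_tendsto hlim (.of_forall fun n =>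
    lintegral_expNeg_mul_le_measure_ne_top (Measure.measurable_lintegral hg)
      (ENNReal.inv_ne_zero.2 (ENNReal.natCast_ne_top n)))
  exact (ae_iff_measure_eq ((Measure.measurable_lintegral hg)
    (measurableSet_singleton ⊤)).compl.nullMeasurableSet).2
    (le_antisymm prob_le_one hmass |>.trans measure_univ.symm)

end Poisson

/-- Laplace functional of the Poisson point process: for measurable `f ≤ 0` with
`e^f − 1 ∈ L¹(X;σ)`, one has `∫ exp(⟨f,γ⟩) π(dγ) = exp (∫ (e^f − 1) dσ)`. -/
theorem poisson_laplace_functional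
    {X : Type*} [MeasurableSpace X] (σ : Measure X) [SigmaFinite σ]
    (π : Measure (Measure X)) (hπ : IsPoissonPP σ π)
    (f : X → ℝ) (hfm : Measurable f) (hfnp : ∀ x, f x ≤ 0)
    (hfint : Integrable (fun x => Real.exp (f x) - 1) σ) :
    ∫ γ : Measure X, Real.exp (∫ x, f x ∂γ) ∂π
      = Real.exp (∫ x, (Real.exp (f x) - 1) ∂σ) := by
  set g : X → ℝ≥0∞ := fun x => ENNReal.ofReal (-f x)
  have hg : Measurable g := hfm.neg.ennreal_ofReal
  have hσ_side : ∫⁻ x, 1 - expNeg (g x) ∂σ = ENNReal.ofReal (-∫ x, Real.exp (f x) - 1 ∂σ) := by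
    rw [lintegral_one_sub_expNeg_ofReal_neg hfnp (by simpa only [neg_sub] using hfint.fun_neg),
      ← integral_neg]
    simp only [neg_sub]
  have hfin : ∀ᵐ γ ∂π, ∫⁻ x, g x ∂γ ≠ ⊤ := hπ.ae_lintegral_ne_top hg
    (ae_of_all _ fun _ => ENNReal.ofReal_ne_top) (hσ_side ▸ ENNReal.ofReal_ne_top)
  calc ∫ γ, Real.exp (∫ x, f x ∂γ) ∂π = ∫ γ, (expNeg (∫⁻ x, g x ∂γ)).toReal ∂π :=
        integral_congr_ae <| hfin.mono fun γ hγ => by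
          simp only [integral_eq_neg_toReal_lintegral_ofReal_neg hfm.aestronglyMeasurable
            (ae_of_all _ hfnp), toReal_expNeg hγ, g]
    _ = (∫⁻ γ, expNeg (∫⁻ x, g x ∂γ) ∂π).toReal :=
        integral_toReal (measurable_expNeg.comp (Measure.measurable_lintegral hg)).aemeasurable
          (ae_of_all _ fun _ => (expNeg_ne_top _).lt_top)
    _ = Real.exp (∫ x, (Real.exp (f x) - 1) ∂σ) := by
        rw [hπ.lintegral_expNeg_lintegral hg, hσ_side, toReal_expNeg ENNReal.ofReal_ne_top,
          ENNReal.toReal_ofReal (neg_nonneg.2 (integral_nonpos fun x =>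
            sub_nonpos.2 (Real.exp_le_one_iff.2 (hfnp x)))), neg_neg]
end

section
/- Let K be a convex set of probability measures on a measurable space and P a set of probability measures such that K ∩ P is convex and P has the property: whenever μ ∈ P and ν ≤ Cμ for a constant C then ν ∈ P (P is solid under bounded densities). Then the extreme points satisfy ex(K ∩ P) = (ex K) ∩ P. -/
open MeasureTheory
open scoped ENNReal

/-- A set `S` of measures is convex (under convex combinations of measures). -/
def MeasureConvex {Ω : Type*} [MeasurableSpace Ω] (S : Set (Measure Ω)) : Prop :=
  ∀ μ₁ ∈ S, ∀ μ₂ ∈ S, ∀ t : ℝ≥0∞, 0 < t → t < 1 → t • μ₁ + (1 - t) • μ₂ ∈ S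

/-- `μ` is an extreme point of the set `S` of (probability) measures. -/
def MeasureExtremePoint {Ω : Type*} [MeasurableSpace Ω] (S : Set (Measure Ω))
    (μ : Measure Ω) : Prop :=
  μ ∈ S ∧ ∀ μ₁ ∈ S, ∀ μ₂ ∈ S, ∀ t : ℝ≥0∞, 0 < t → t < 1 →
    μ = t • μ₁ + (1 - t) • μ₂ → μ₁ = μ ∧ μ₂ = μ

/-! An extreme point `μ` of `K ∩ P` is extreme in `K`: in a decomposition
`μ = t • μ₁ + (1 - t) • μ₂` inside `K`, each `μᵢ` has density at most `t⁻¹` resp. `(1 - t)⁻¹`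
with respect to `μ`, so solidity of `P` puts it in `K ∩ P`. -/

section

variable {Ω : Type*} [MeasurableSpace Ω]

def IsSolidUnderBoundedDensity (P : Set (Measure Ω)) : Prop :=
  ∀ μ ∈ P, ∀ ν : Measure Ω, IsProbabilityMeasure ν → (∃ C : ℝ≥0∞, C ≠ ⊤ ∧ ν ≤ C • μ) → ν ∈ P

theorem Measure.le_inv_smul_of_smul_le {μ ν : Measure Ω} {t : ℝ≥0∞} (ht₀ : t ≠ 0)
    (ht : t ≠ ⊤) (h : t • ν ≤ μ) : ν ≤ t⁻¹ • μ :=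
  calc ν = t⁻¹ • t • ν := by rw [smul_smul, ENNReal.inv_mul_cancel ht₀ ht, one_smul]
    _ ≤ t⁻¹ • μ := smul_le_smul_left _ h

theorem IsSolidUnderBoundedDensity.mem_of_smul_add_eq {P : Set (Measure Ω)}
    (hP : IsSolidUnderBoundedDensity P) {μ ν ρ : Measure Ω} (hμ : μ ∈ P)
    [IsProbabilityMeasure ν] {t : ℝ≥0∞} (ht₀ : t ≠ 0) (ht : t ≠ ⊤) (h : μ = t • ν + ρ) :
    ν ∈ P :=
  hP μ hμ ν ‹_› ⟨t⁻¹, ENNReal.inv_ne_top.mpr ht₀,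
    Measure.le_inv_smul_of_smul_le ht₀ ht (h ▸ Measure.le_add_right le_rfl)⟩

theorem MeasureExtremePoint.mono {S T : Set (Measure Ω)} {μ : Measure Ω} (hST : S ⊆ T)
    (hμ : MeasureExtremePoint T μ) (hμS : μ ∈ S) : MeasureExtremePoint S μ :=
  ⟨hμS, fun μ₁ h₁ μ₂ h₂ t ht₀ ht₁ h ↦ hμ.2 μ₁ (hST h₁) μ₂ (hST h₂) t ht₀ ht₁ h⟩

theorem MeasureExtremePoint.of_inter_solid {K P : Set (Measure Ω)} {μ : Measure Ω}
    (hK : ∀ ν ∈ K, IsProbabilityMeasure ν) (hP : IsSolidUnderBoundedDensity P)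
    (hμ : MeasureExtremePoint (K ∩ P) μ) : MeasureExtremePoint K μ := by
  refine ⟨hμ.1.1, fun μ₁ h₁ μ₂ h₂ t ht₀ ht₁ h ↦ ?_⟩
  have : IsProbabilityMeasure μ₁ := hK μ₁ h₁
  have : IsProbabilityMeasure μ₂ := hK μ₂ h₂
  have hs₀ : 1 - t ≠ 0 := (tsub_pos_of_lt ht₁).ne'
  have hs : 1 - t ≠ ⊤ := ENNReal.sub_ne_top ENNReal.one_ne_top
  have hP₁ : μ₁ ∈ P := hP.mem_of_smul_add_eq hμ.1.2 ht₀.ne' ht₁.ne_top h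
  have hP₂ : μ₂ ∈ P := hP.mem_of_smul_add_eq hμ.1.2 hs₀ hs (h.trans (add_comm _ _))
  exact hμ.2 μ₁ ⟨h₁, hP₁⟩ μ₂ ⟨h₂, hP₂⟩ t ht₀ ht₁ h

end

theorem extremePoints_inter_solid_general
    {Ω : Type*} [MeasurableSpace Ω] (K P : Set (Measure Ω))
    (hKprob : ∀ μ ∈ K, IsProbabilityMeasure μ)
    (hPsolid : ∀ μ ∈ P, ∀ ν : Measure Ω, IsProbabilityMeasure ν →
      (∃ C : ℝ≥0∞, C ≠ ⊤ ∧ ν ≤ C • μ) → ν ∈ P) :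
    {μ | MeasureExtremePoint (K ∩ P) μ} = {μ | MeasureExtremePoint K μ} ∩ P := by
  ext μ
  exact ⟨fun h ↦ ⟨h.of_inter_solid hKprob hPsolid, h.1.2⟩,
    fun ⟨h, hμP⟩ ↦ h.mono Set.inter_subset_left ⟨h.1, hμP⟩⟩

/-- For a convex set `K` of probability measures and a set `P` of probability measures such
that `K ∩ P` is convex and `P` is solid under bounded densities (`μ ∈ P`, `ν ≤ C·μ` imply
`ν ∈ P`), the extreme points satisfy `ex (K ∩ P) = (ex K) ∩ P`. -/
theorem extremePoints_inter_solid
    {Ω : Type*} [MeasurableSpace Ω] (K P : Set (Measure Ω))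
    (hKprob : ∀ μ ∈ K, IsProbabilityMeasure μ)
    (hPprob : ∀ μ ∈ P, IsProbabilityMeasure μ)
    (hKconv : MeasureConvex K)
    (hKPconv : MeasureConvex (K ∩ P))
    (hPsolid : ∀ μ ∈ P, ∀ ν : Measure Ω, IsProbabilityMeasure ν →
      (∃ C : ℝ≥0∞, C ≠ ⊤ ∧ ν ≤ C • μ) → ν ∈ P) :
    {μ | MeasureExtremePoint (K ∩ P) μ} = {μ | MeasureExtremePoint K μ} ∩ P :=
  extremePoints_inter_solid_general K P hKprob hPsolid
end
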